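/- Let G be a DAG with topological order v_1,...,v_n and G_i = G[{v_1,...,v_i}]. Every frontier antichain A of G_i is either of the form A' ∪ {v_i} for a frontier antichain A' of G_{i-1} not reaching v_i, or A itself is a frontier antichain of G_{i-1}. -/

import Mathlib

open Relation

/-- A directed graph (edge relation `E`) is acyclic. -/
def Acyclic {V : Type*} (E : V → V → Prop) : Prop := ∀ v, ¬ TransGen E v v

/-- `A` is an antichain: its vertices are pairwise non-reachable
(reachability = reflexive-transitive closure of `E`). -/
def IsAC {V : Type*} (E : V → V → Prop) (A : Finset V) : Prop :=
  ∀ a ∈ A, ∀ b ∈ A, a ≠ b → ¬ ReflTransGen E a b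

/-- `B` dominates `A`: same size, and every vertex of `B` is reachable from some vertex of `A`. -/
def Dom {V : Type*} (E : V → V → Prop) (B A : Finset V) : Prop :=
  B.card = A.card ∧ ∀ b ∈ B, ∃ a ∈ A, ReflTransGen E a b

/-- A frontier antichain: an antichain not dominated by any other antichain. -/
def Frontier {V : Type*} (E : V → V → Prop) (A : Finset V) : Prop :=
  IsAC E A ∧ ∀ B : Finset V, IsAC E B → B ≠ A → ¬ Dom E B A

/-- The identity order on `Fin n` is a topological order for `E`. -/
def Topo {n : ℕ} (E : Fin n → Fin n → Prop) : Prop := ∀ u v, E u v → (u : ℕ) < (v : ℕ)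

/-- The edge relation of the induced subgraph `G_i` on the first `i` vertices. -/
def Erest {n : ℕ} (E : Fin n → Fin n → Prop) (i : ℕ) (u v : Fin n) : Prop :=
  E u v ∧ (u : ℕ) < i ∧ (v : ℕ) < i

/-- `A` is a frontier antichain of the induced subgraph `G_i` on the first `i` vertices. -/
def FrontierIn {n : ℕ} (E : Fin n → Fin n → Prop) (i : ℕ) (A : Finset (Fin n)) : Prop :=
  (∀ a ∈ A, (a : ℕ) < i) ∧ IsAC (Erest E i) A ∧
  ∀ B : Finset (Fin n), (∀ b ∈ B, (b : ℕ) < i) → IsAC (Erest E i) B → B ≠ A →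
    ¬ Dom (Erest E i) B A

/-- The support `S_i`: union of all frontier antichains of `G_i`. -/
def SupportIn {n : ℕ} (E : Fin n → Fin n → Prop) (i : ℕ) : Set (Fin n) :=
  {v | ∃ A : Finset (Fin n), FrontierIn E i A ∧ v ∈ A}

/- A frontier antichain `A` of `G_{i+1}` restricts to `G_i`: when `v_i ∉ A`, an antichain of `G_i`
dominating `A` would dominate it in `G_{i+1}` as well; when `v_i ∈ A`, an antichain `B` of `G_i`
dominating `A \ {v_i}` gives the antichain `B ∪ {v_i}` of `G_{i+1}` dominating `A`. Both transfers
rest on two facts about the topological order: reachability in `G_{i+1}` between vertices below `i`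
stays inside `G_i`, and `v_i` is a sink of `G_{i+1}`. -/

section Antichain

variable {V : Type*} {r s : V → V → Prop}

lemma IsAC.mono (hrs : ∀ u v, r u v → s u v) {A : Finset V} (hA : IsAC s A) : IsAC r A :=
  fun a ha b hb hne hab => hA a ha b hb hne (ReflTransGen.mono hrs _ _ hab)

lemma IsAC.subset {A B : Finset V} (hBA : B ⊆ A) (hA : IsAC r A) : IsAC r B :=
  fun a ha b hb => hA a (hBA ha) b (hBA hb)

lemma IsAC.insert [DecidableEq V] {B : Finset V} {v : V} (hB : IsAC r B)
    (hout : ∀ b ∈ B, ¬ ReflTransGen r v b) (hin : ∀ b ∈ B, ¬ ReflTransGen r b v) :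
    IsAC r (insert v B) := by
  intro a ha b hb hne
  rcases Finset.mem_insert.mp ha with rfl | haB
  · rcases Finset.mem_insert.mp hb with rfl | hbB
    · exact absurd rfl hne
    · exact hout b hbB
  · rcases Finset.mem_insert.mp hb with rfl | hbB
    · exact hin a haB
    · exact hB a haB b hbB hne

lemma Dom.mono (hrs : ∀ u v, r u v → s u v) {A B : Finset V} (h : Dom r B A) : Dom s B A :=
  ⟨h.1, fun b hb => (h.2 b hb).imp fun _ ⟨ha, hab⟩ => ⟨ha, ReflTransGen.mono hrs _ _ hab⟩⟩

end Antichain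

section Restriction

variable {n : ℕ} {E : Fin n → Fin n → Prop}

lemma Erest.mono {i j : ℕ} (hij : i ≤ j) {u v : Fin n} (h : Erest E i u v) : Erest E j u v :=
  ⟨h.1, h.2.1.trans_le hij, h.2.2.trans_le hij⟩

lemma Topo.val_le_of_reflTransGen (hE : Topo E) {j : ℕ} {a b : Fin n}
    (h : ReflTransGen (Erest E j) a b) : (a : ℕ) ≤ b := by
  induction h with
  | refl => exact le_rfl
  | tail _ hcb ih => exact ih.trans (hE _ _ hcb.1).le

lemma Topo.reflTransGen_erest_of_lt (hE : Topo E) {i j : ℕ} {a b : Fin n} (hb : (b : ℕ) < i)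
    (h : ReflTransGen (Erest E j) a b) : ReflTransGen (Erest E i) a b := by
  induction h using ReflTransGen.head_induction_on with
  | refl => exact .refl
  | head hac hcb ih =>
    have hc : _ < i := (hE.val_le_of_reflTransGen hcb).trans_lt hb
    exact .head ⟨hac.1, (hE _ _ hac.1).trans hc, hc⟩ ih

lemma Topo.eq_of_reflTransGen_erest_succ (hE : Topo E) {i : ℕ} (hi : i < n) {b : Fin n}
    (h : ReflTransGen (Erest E (i + 1)) ⟨i, hi⟩ b) : b = ⟨i, hi⟩ := by
  rcases h.cases_head with rfl | ⟨c, hc, -⟩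
  · rfl
  · exact absurd hc.2.2 (Nat.not_lt.mpr (hE _ _ hc.1))

lemma Topo.isAC_erest_succ_iff (hE : Topo E) {i : ℕ} {B : Finset (Fin n)}
    (hB : ∀ b ∈ B, (b : ℕ) < i) : IsAC (Erest E (i + 1)) B ↔ IsAC (Erest E i) B :=
  ⟨IsAC.mono fun _ _ => Erest.mono i.le_succ, fun hBi a _ b hb hne hab =>
    hBi a ‹_› b hb hne (hE.reflTransGen_erest_of_lt (hB b hb) hab)⟩

lemma val_lt_of_lt_succ_of_ne {i : ℕ} (hi : i < n) {a : Fin n} (ha : (a : ℕ) < i + 1)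
    (hne : a ≠ ⟨i, hi⟩) : (a : ℕ) < i :=
  (Nat.lt_succ_iff_lt_or_eq.mp ha).resolve_right fun h => hne (Fin.ext h)

end Restriction

section Frontier

variable {n : ℕ} {E : Fin n → Fin n → Prop} {i : ℕ} {A : Finset (Fin n)}

lemma Topo.frontierIn_of_frontierIn_succ_of_notMem (hE : Topo E) (hi : i < n)
    (hA : FrontierIn E (i + 1) A) (hvi : (⟨i, hi⟩ : Fin n) ∉ A) : FrontierIn E i A := by
  obtain ⟨hAbd, hAac, hAfr⟩ := hA
  refine ⟨fun a ha => val_lt_of_lt_succ_of_ne hi (hAbd a ha) (ne_of_mem_of_not_mem ha hvi),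
    hAac.mono fun _ _ => Erest.mono i.le_succ, fun B hBbd hBac hBne hdom => ?_⟩
  exact hAfr B (fun b hb => (hBbd b hb).trans i.lt_succ_self)
    ((hE.isAC_erest_succ_iff hBbd).mpr hBac) hBne (hdom.mono fun _ _ => Erest.mono i.le_succ)

lemma Topo.frontierIn_erase_of_frontierIn_succ (hE : Topo E) (hi : i < n)
    (hA : FrontierIn E (i + 1) A) (hvi : (⟨i, hi⟩ : Fin n) ∈ A) :
    FrontierIn E i (A.erase ⟨i, hi⟩) := by
  obtain ⟨hAbd, hAac, hAfr⟩ := hA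
  have lift : ∀ u v, Erest E i u v → Erest E (i + 1) u v := fun _ _ => Erest.mono i.le_succ
  refine ⟨fun a ha => val_lt_of_lt_succ_of_ne hi (hAbd a (Finset.mem_of_mem_erase ha))
    (Finset.ne_of_mem_erase ha), (hAac.subset (Finset.erase_subset _ _)).mono lift,
    fun B hBbd hBac hBne ⟨hcard, hdom⟩ => ?_⟩
  have hviB : (⟨i, hi⟩ : Fin n) ∉ B := fun h => (hBbd _ h).false
  have hout : ∀ b ∈ B, ¬ ReflTransGen (Erest E (i + 1)) ⟨i, hi⟩ b := fun b hb hvb =>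
    hviB (hE.eq_of_reflTransGen_erest_succ hi hvb ▸ hb)
  -- `b` lies above some `a ∈ A \ {v_i}`, which cannot reach `v_i` in the antichain `A`.
  have hin : ∀ b ∈ B, ¬ ReflTransGen (Erest E (i + 1)) b ⟨i, hi⟩ := fun b hb hbv => by
    obtain ⟨a, ha, hab⟩ := hdom b hb
    exact hAac a (Finset.mem_of_mem_erase ha) _ hvi (Finset.ne_of_mem_erase ha)
      ((ReflTransGen.mono lift _ _ hab).trans hbv)
  refine hAfr (insert ⟨i, hi⟩ B) ?_ (((hE.isAC_erest_succ_iff hBbd).mpr hBac).insert hout hin)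
    ?_ ⟨?_, ?_⟩
  · simpa [Finset.forall_mem_insert] using fun b hb => (hBbd b hb).trans i.lt_succ_self
  · rintro rfl
    exact hBne (Finset.erase_insert hviB).symm
  · rw [Finset.card_insert_of_notMem hviB, hcard, Finset.card_erase_add_one hvi]
  · rw [Finset.forall_mem_insert]
    refine ⟨⟨_, hvi, .refl⟩, fun b hb => ?_⟩
    obtain ⟨a, ha, hab⟩ := hdom b hb
    exact ⟨a, Finset.mem_of_mem_erase ha, ReflTransGen.mono lift _ _ hab⟩

end Frontier

/-- every frontier antichain of `G_{i+1}` either consists of a frontier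
antichain of `G_i` not reaching `v_i` together with `v_i`, or is itself a frontier
antichain of `G_i`. -/
theorem frontier_dichotomy {n : ℕ} (E : Fin n → Fin n → Prop) (hE : Topo E)
    (i : ℕ) (hi : i < n) (A : Finset (Fin n))
    (hA : FrontierIn E (i + 1) A) :
    ((⟨i, hi⟩ : Fin n) ∈ A ∧ FrontierIn E i (A.erase ⟨i, hi⟩) ∧
      ∀ a ∈ A.erase ⟨i, hi⟩, ¬ ReflTransGen (Erest E (i + 1)) a ⟨i, hi⟩) ∨
    ((⟨i, hi⟩ : Fin n) ∉ A ∧ FrontierIn E i A) := by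
  by_cases hvi : (⟨i, hi⟩ : Fin n) ∈ A
  · refine .inl ⟨hvi, hE.frontierIn_erase_of_frontierIn_succ hi hA hvi, fun a ha => ?_⟩
    exact hA.2.1 a (Finset.mem_of_mem_erase ha) _ hvi (Finset.ne_of_mem_erase ha)
  · exact .inr ⟨hvi, hE.frontierIn_of_frontierIn_succ_of_notMem hi hA hvi⟩
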